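/- Let (K, val) be a valued field whose residue field has characteristic two, in which every strict unit admits a square root, and let A be a subring containing the valuation ring B. Then every element x ∈ Kˣ \ Bˣ is a sum of two squares u² + v² with val(u) = val(v) = min(e, val(x)); moreover if x ∈ A then u, v can be chosen in A. Consequently: if ℳ is a quasi-quadratic module of A, x ∈ ℳ, y ∈ A and val(y) > val(x), then y ∈ ℳ; and if ℳ contains an element x with val(x) < e, then ℳ = A. -/

import Mathlib

/-- A (multiplicatively written) valuation on a field `K` with value group `G`:
`v` is multiplicative and satisfies the ultrametric inequality on nonzero elements,
and is surjective onto `G`.  The value at `0` is irrelevant (the paper's `∞`). -/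
structure MulValuation (K : Type*) [Field K] (G : Type*) [CommGroup G] [LinearOrder G] [IsOrderedMonoid G] where
  v : K → G
  map_mul : ∀ ⦃x y : K⦄, x ≠ 0 → y ≠ 0 → v (x * y) = v x * v y
  min_le_map_add : ∀ ⦃x y : K⦄, x ≠ 0 → y ≠ 0 → x + y ≠ 0 → min (v x) (v y) ≤ v (x + y)
  surj : ∀ g : G, ∃ x : K, x ≠ 0 ∧ v x = g

namespace MulValuation

variable {K : Type*} [Field K] {G : Type*} [CommGroup G] [LinearOrder G] [IsOrderedMonoid G]

/-- The valuation ring `B = {x : val x ≥ e} ∪ {0}`, as a set. -/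
def ringSet (V : MulValuation K G) : Set K := {x : K | x = 0 ∨ 1 ≤ V.v x}

/-- `val(Aˣ)`: the set of values of units of a subring `A` of `K`. -/
def unitVals (V : MulValuation K G) (A : Subring K) : Set G :=
  {g : G | ∃ x : K, x ≠ 0 ∧ x ∈ A ∧ x⁻¹ ∈ A ∧ V.v x = g}

end MulValuation

/-- `π : K → F` is a residue homomorphism for `V`: it is a surjective ring
homomorphism on the valuation ring, whose nonvanishing locus on the valuation ring
is exactly the set of units of the valuation ring. -/
def MulValuation.IsResidue {K : Type*} [Field K] {G : Type*} [CommGroup G] [LinearOrder G] [IsOrderedMonoid G]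
    {F : Type*} [Field F] (V : MulValuation K G) (π : K → F) : Prop :=
  π 0 = 0 ∧ π 1 = 1 ∧
  (∀ x y : K, x ∈ V.ringSet → y ∈ V.ringSet → π (x + y) = π x + π y) ∧
  (∀ x y : K, x ∈ V.ringSet → y ∈ V.ringSet → π (x * y) = π x * π y) ∧
  (∀ x : K, x ≠ 0 → x ∈ V.ringSet → (π x ≠ 0 ↔ V.v x = 1)) ∧
  (∀ c : F, ∃ x ∈ V.ringSet, π x = c)


/-!
Since `char F = 2`, both `-1` and `1 + z` with `val z > e` are strict units, hence squares:
`i² = -1` and `s² = 1 + z`. If `val x > e` then `x = s² + i²` with `s² = 1 + x`; if `val x < e`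
then `x = (x t)² + (i x)²` with `t² = 1 + x⁻¹`. For a quasi-quadratic module `ℳ` and
`val y > val x` with `x ∈ ℳ`, writing `y / x = u² + w²` with `u, w ∈ B ⊆ A` gives
`y = u² x + w² x ∈ ℳ`; and if `val x < e`, every `y ∈ A` with `val y ≤ val x` satisfies
`val (y² x) < val y`, so `y ∈ ℳ` as well.
-/

namespace MulValuation

variable {K : Type*} [Field K] {G : Type*} [CommGroup G] [LinearOrder G] [IsOrderedMonoid G]
  (V : MulValuation K G)

theorem map_one : V.v 1 = 1 := by
  simpa using V.map_mul (one_ne_zero (α := K)) one_ne_zero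

theorem map_sq {x : K} (hx : x ≠ 0) : V.v (x ^ 2) = V.v x ^ 2 := by
  rw [sq, sq, V.map_mul hx hx]

theorem map_eq_one_of_map_sq {x : K} (hx : x ≠ 0) (h : V.v (x ^ 2) = 1) : V.v x = 1 := by
  simpa using (pow_eq_one_iff (n := 2)).1 ((V.map_sq hx).symm.trans h)

theorem map_neg {x : K} (hx : x ≠ 0) : V.v (-x) = V.v x :=
  pow_left_injective two_ne_zero <| by
    simp only [← V.map_sq hx, ← V.map_sq (neg_ne_zero.2 hx), neg_sq]

theorem map_inv {x : K} (hx : x ≠ 0) : V.v x⁻¹ = (V.v x)⁻¹ :=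
  eq_inv_of_mul_eq_one_right <| by
    rw [← V.map_mul hx (inv_ne_zero hx), mul_inv_cancel₀ hx, map_one]

theorem map_div {x y : K} (hx : x ≠ 0) (hy : y ≠ 0) : V.v (x / y) = V.v x / V.v y := by
  rw [div_eq_mul_inv, V.map_mul hx (inv_ne_zero hy), V.map_inv hy, div_eq_mul_inv]

theorem add_ne_zero_and_map_add_eq_of_lt {x y : K} (hx : x ≠ 0) (hy : y ≠ 0)
    (hxy : V.v x < V.v y) : x + y ≠ 0 ∧ V.v (x + y) = V.v x := by
  have hxy0 : x + y ≠ 0 := by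
    intro h
    rw [eq_neg_of_add_eq_zero_right h, V.map_neg hx] at hxy
    exact hxy.false
  refine ⟨hxy0, le_antisymm ?_ (min_eq_left hxy.le ▸ V.min_le_map_add hx hy hxy0)⟩
  by_contra! hlt
  have hx' : x + y + -y = x := by ring
  have := V.min_le_map_add hxy0 (neg_ne_zero.2 hy) (hx'.symm ▸ hx)
  rw [hx', V.map_neg hy] at this
  exact (lt_min hlt hxy).not_ge this

theorem map_one_add_of_one_lt {z : K} (hz : z ≠ 0) (hvz : 1 < V.v z) :
    1 + z ≠ 0 ∧ V.v (1 + z) = 1 := by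
  simpa [map_one] using V.add_ne_zero_and_map_add_eq_of_lt one_ne_zero hz (V.map_one ▸ hvz)

theorem exists_sq_eq_of_strictUnit {F : Type*} [Field F] {π : K → F}
    (hsqrt : ∀ x : K, x ≠ 0 → V.v x = 1 → π x = 1 → ∃ y : K, x = y ^ 2)
    {x : K} (hx : x ≠ 0) (hvx : V.v x = 1) (hπx : π x = 1) :
    ∃ s : K, s ≠ 0 ∧ V.v s = 1 ∧ x = s ^ 2 := by
  obtain ⟨s, rfl⟩ := hsqrt x hx hvx hπx
  have hs : s ≠ 0 := by rintro rfl; simp at hx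
  exact ⟨s, hs, V.map_eq_one_of_map_sq hs hvx, rfl⟩

section Residue

variable {V} {F : Type*} [Field F] {π : K → F}

theorem IsResidue.map_eq_zero_of_one_lt (hres : V.IsResidue π) {x : K} (hvx : 1 < V.v x) :
    π x = 0 := by
  rcases eq_or_ne x 0 with rfl | hx
  · exact hres.1
  · by_contra h
    exact hvx.ne' ((hres.2.2.2.2.1 x hx (Or.inr hvx.le)).1 h)

theorem IsResidue.map_one_add_of_one_lt (hres : V.IsResidue π) {z : K} (hvz : 1 < V.v z) :
    π (1 + z) = 1 := by
  rw [hres.2.2.1 1 z (Or.inr V.map_one.ge) (Or.inr hvz.le), hres.2.1,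
    hres.map_eq_zero_of_one_lt hvz, add_zero]

theorem IsResidue.map_neg_one (hres : V.IsResidue π) (hchar2 : (2 : F) = 0) : π (-1) = 1 := by
  have hneg1 : V.v (-1 : K) = 1 := (V.map_neg one_ne_zero).trans V.map_one
  have := hres.2.2.1 (-1) 1 (Or.inr hneg1.ge) (Or.inr V.map_one.ge)
  rw [neg_add_cancel, hres.1, hres.2.1] at this
  linear_combination -this - hchar2

end Residue

variable {V} {F : Type*} [Field F] {π : K → F}

theorem exists_sq_eq_neg_one (hres : V.IsResidue π) (hchar2 : (2 : F) = 0)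
    (hsqrt : ∀ x : K, x ≠ 0 → V.v x = 1 → π x = 1 → ∃ y : K, x = y ^ 2) :
    ∃ i : K, i ≠ 0 ∧ V.v i = 1 ∧ -1 = i ^ 2 :=
  V.exists_sq_eq_of_strictUnit hsqrt (neg_ne_zero.2 one_ne_zero)
    ((V.map_neg one_ne_zero).trans V.map_one) (hres.map_neg_one hchar2)

theorem exists_sq_eq_one_add (hres : V.IsResidue π)
    (hsqrt : ∀ x : K, x ≠ 0 → V.v x = 1 → π x = 1 → ∃ y : K, x = y ^ 2)
    {z : K} (hz : z ≠ 0) (hvz : 1 < V.v z) :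
    ∃ s : K, s ≠ 0 ∧ V.v s = 1 ∧ 1 + z = s ^ 2 :=
  V.exists_sq_eq_of_strictUnit hsqrt (V.map_one_add_of_one_lt hz hvz).1
    (V.map_one_add_of_one_lt hz hvz).2 (hres.map_one_add_of_one_lt hvz)

theorem exists_sq_add_sq (hres : V.IsResidue π) (hchar2 : (2 : F) = 0)
    (hsqrt : ∀ x : K, x ≠ 0 → V.v x = 1 → π x = 1 → ∃ y : K, x = y ^ 2)
    {A : Subring K} (hBA : V.ringSet ⊆ (A : Set K)) {x : K} (hx : x ≠ 0) (hvx : V.v x ≠ 1) :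
    ∃ u w : K, u ≠ 0 ∧ w ≠ 0 ∧ x = u ^ 2 + w ^ 2 ∧
      V.v u = min 1 (V.v x) ∧ V.v w = min 1 (V.v x) ∧
      (x ∈ A → u ∈ A ∧ w ∈ A) := by
  obtain ⟨i, hi0, hvi, hi⟩ := exists_sq_eq_neg_one hres hchar2 hsqrt
  have hiA : i ∈ A := hBA (Or.inr hvi.ge)
  rcases hvx.lt_or_gt with hlt | hgt
  · have hvx' : 1 < V.v x⁻¹ := by rwa [V.map_inv hx, Left.one_lt_inv_iff]
    obtain ⟨t, ht0, hvt, ht⟩ := exists_sq_eq_one_add hres hsqrt (inv_ne_zero hx) hvx'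
    refine ⟨x * t, i * x, mul_ne_zero hx ht0, mul_ne_zero hi0 hx, ?_, ?_, ?_,
      fun hxA ↦ ⟨A.mul_mem hxA (hBA (Or.inr hvt.ge)), A.mul_mem hiA hxA⟩⟩
    · rw [mul_pow, mul_pow, ← ht, ← hi]
      field_simp
      ring
    · rw [V.map_mul hx ht0, hvt, mul_one, min_eq_right hlt.le]
    · rw [V.map_mul hi0 hx, hvi, one_mul, min_eq_right hlt.le]
  · obtain ⟨s, hs0, hvs, hs⟩ := exists_sq_eq_one_add hres hsqrt hx hgt
    refine ⟨s, i, hs0, hi0, ?_, ?_, ?_, fun _ ↦ ⟨hBA (Or.inr hvs.ge), hiA⟩⟩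
    · rw [← hs, ← hi]
      ring
    · rw [hvs, min_eq_left hgt.le]
    · rw [hvi, min_eq_left hgt.le]

theorem exists_mem_sq_add_sq_of_one_lt (hres : V.IsResidue π) (hchar2 : (2 : F) = 0)
    (hsqrt : ∀ x : K, x ≠ 0 → V.v x = 1 → π x = 1 → ∃ y : K, x = y ^ 2)
    {A : Subring K} (hBA : V.ringSet ⊆ (A : Set K)) {q : K} (hq : q ≠ 0) (hvq : 1 < V.v q) :
    ∃ u ∈ A, ∃ w ∈ A, q = u ^ 2 + w ^ 2 := by
  obtain ⟨u, w, -, -, hq, hvu, hvw, -⟩ := exists_sq_add_sq hres hchar2 hsqrt hBA hq hvq.ne'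
  rw [min_eq_left hvq.le] at hvu hvw
  exact ⟨u, hBA (Or.inr hvu.ge), w, hBA (Or.inr hvw.ge), hq⟩

end MulValuation

structure IsQuasiQuadraticModule {K : Type*} [Field K] (A : Subring K) (M : Set K) : Prop where
  subset : M ⊆ A
  zero_mem : (0 : K) ∈ M
  add_mem : ∀ x ∈ M, ∀ y ∈ M, x + y ∈ M
  sq_mul_mem : ∀ a ∈ A, ∀ x ∈ M, a ^ 2 * x ∈ M

namespace IsQuasiQuadraticModule

variable {K : Type*} [Field K] {G : Type*} [CommGroup G] [LinearOrder G] [IsOrderedMonoid G]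
  {V : MulValuation K G} {A : Subring K} {M : Set K}

theorem mem_of_map_lt (hM : IsQuasiQuadraticModule A M)
    (hsq : ∀ q : K, q ≠ 0 → 1 < V.v q → ∃ u ∈ A, ∃ w ∈ A, q = u ^ 2 + w ^ 2)
    {x y : K} (hxM : x ∈ M) (hx : x ≠ 0) (hxy : V.v x < V.v y) : y ∈ M := by
  rcases eq_or_ne y 0 with rfl | hy
  · exact hM.zero_mem
  have hvq : 1 < V.v (y / x) := by rwa [V.map_div hy hx, one_lt_div']
  obtain ⟨u, huA, w, hwA, hq⟩ := hsq (y / x) (div_ne_zero hy hx) hvq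
  have hyx : y = u ^ 2 * x + w ^ 2 * x := by
    rw [← add_mul, ← hq, div_mul_cancel₀ y hx]
  exact hyx ▸ hM.add_mem _ (hM.sq_mul_mem u huA x hxM) _ (hM.sq_mul_mem w hwA x hxM)

theorem eq_of_map_lt_one (hM : IsQuasiQuadraticModule A M)
    (hsq : ∀ q : K, q ≠ 0 → 1 < V.v q → ∃ u ∈ A, ∃ w ∈ A, q = u ^ 2 + w ^ 2)
    {x : K} (hxM : x ∈ M) (hx : x ≠ 0) (hvx : V.v x < 1) : M = A := by
  refine hM.subset.antisymm fun y hyA ↦ ?_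
  rcases eq_or_ne y 0 with rfl | hy
  · exact hM.zero_mem
  rcases lt_or_ge (V.v x) (V.v y) with hxy | hyx
  · exact hM.mem_of_map_lt hsq hxM hx hxy
  · have hy2x : y ^ 2 * x ≠ 0 := mul_ne_zero (pow_ne_zero 2 hy) hx
    have hvy2x : V.v (y ^ 2 * x) < V.v y := by
      rw [V.map_mul (pow_ne_zero 2 hy) hx, V.map_sq hy, sq, mul_assoc]
      exact mul_lt_of_lt_one_right' _ (Left.mul_lt_one (hyx.trans_lt hvx) hvx)
    exact hM.mem_of_map_lt hsq (hM.sq_mul_mem y hyA x hxM) hy2x hvy2x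

end IsQuasiQuadraticModule

theorem stmt18 {K : Type*} [Field K] {G : Type*} [CommGroup G] [LinearOrder G] [IsOrderedMonoid G]
    {F : Type*} [Field F] (V : MulValuation K G) (π : K → F)
    (hres : V.IsResidue π)
    -- the residue field has characteristic two
    (hchar2 : (2 : F) = 0)
    (hsqrt : ∀ x : K, x ≠ 0 → V.v x = 1 → π x = 1 → ∃ y : K, x = y ^ 2)
    (A : Subring K) (hBA : V.ringSet ⊆ (A : Set K)) :
    -- basic lemma: every `x ∈ Kˣ \ Bˣ` is a sum of two squares of the right value
    (∀ x : K, x ≠ 0 → V.v x ≠ 1 →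
      ∃ u w : K, u ≠ 0 ∧ w ≠ 0 ∧ x = u ^ 2 + w ^ 2 ∧
        V.v u = min 1 (V.v x) ∧ V.v w = min 1 (V.v x) ∧
        (x ∈ A → u ∈ A ∧ w ∈ A)) ∧
    -- consequences for quasi-quadratic modules of `A`
    (∀ M : Set K, M ⊆ (A : Set K) → (0 : K) ∈ M →
      (∀ x ∈ M, ∀ y ∈ M, x + y ∈ M) → (∀ a : K, a ∈ A → ∀ x ∈ M, a ^ 2 * x ∈ M) →
      (∀ x ∈ M, ∀ y : K, y ∈ A → x ≠ 0 → (y = 0 ∨ V.v x < V.v y) → y ∈ M) ∧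
      (∀ x ∈ M, x ≠ 0 → V.v x < 1 → M = (A : Set K))) := by
  refine ⟨fun x hx hvx ↦ V.exists_sq_add_sq hres hchar2 hsqrt hBA hx hvx,
    fun M hMA hM0 hMadd hMsq ↦ ?_⟩
  have hsq : ∀ q : K, q ≠ 0 → 1 < V.v q → ∃ u ∈ A, ∃ w ∈ A, q = u ^ 2 + w ^ 2 :=
    fun _ hq hvq ↦ V.exists_mem_sq_add_sq_of_one_lt hres hchar2 hsqrt hBA hq hvq
  have hM : IsQuasiQuadraticModule A M := ⟨hMA, hM0, hMadd, hMsq⟩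
  refine ⟨fun x hxM y _ hx hy ↦ ?_, fun x hxM hx hvx ↦ hM.eq_of_map_lt_one hsq hxM hx hvx⟩
  rcases hy with rfl | hxy
  · exact hM0
  · exact hM.mem_of_map_lt hsq hxM hx hxy
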